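/- arXiv:2110.11941 — 3 statements merged into one kernel-verified Lean document; each statement's English description precedes it below -/
import Mathlib

section
/- If A is a diagonalizable real n×n matrix with A = R Λ R⁻¹ (Λ diagonal) and H is symmetric positive definite with AH symmetric, then there exists an invertible matrix R' whose columns are eigenvectors of A (i.e., A = R' Λ R'⁻¹ for some diagonal Λ with the same eigenvalues) such that H = R' R'ᵀ. -/
open Matrix
open scoped MatrixOrder

lemma psd_trace_zero {n : ℕ} {N : Matrix (Fin n) (Fin n) ℝ} (hN : N.PosSemidef)
    (h : N.trace = 0) : N = 0 := by
  obtain ⟨C, rfl⟩ := CStarAlgebra.nonneg_iff_eq_star_mul_self.mp hN.nonneg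
  rw [star_eq_conjTranspose, Matrix.conjTranspose_mul_self_eq_zero]
  have h' : ∑ i, ∑ j, (C j i)^2 = 0 := by
    simpa [Matrix.trace, Matrix.diag, Matrix.mul_apply, Matrix.conjTranspose_apply, sq] using h
  ext j i
  have := (Finset.sum_eq_zero_iff_of_nonneg (fun i _ => Finset.sum_nonneg
    (fun j _ => sq_nonneg (C j i)))).mp h' i (Finset.mem_univ i)
  have := (Finset.sum_eq_zero_iff_of_nonneg (fun j _ => sq_nonneg (C j i))).mp this j
    (Finset.mem_univ j)
  simpa [sq] using pow_eq_zero_iff (n := 2) (by norm_num) |>.mp this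

/-- Barth's eigenvector scaling theorem: if `A = R * diagonal d * R⁻¹` is
diagonalizable, `H` is symmetric positive definite and `A * H` is symmetric,
then there is an invertible eigenvector matrix `R'` with
`A = R' * diagonal d * R'⁻¹` (same eigenvalues) and `H = R' * R'ᵀ`. -/
theorem stmt_1 (n : ℕ) (A H R : Matrix (Fin n) (Fin n) ℝ) (d : Fin n → ℝ)
    (hR : IsUnit R.det) (hdiag : A = R * Matrix.diagonal d * R⁻¹)
    (hH : H.PosDef) (hAH : (A * H).IsSymm) :
    ∃ R' : Matrix (Fin n) (Fin n) ℝ,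
      IsUnit R'.det ∧ A = R' * Matrix.diagonal d * R'⁻¹ ∧
      H = R' * R'.transpose := by
  classical
  haveI : Invertible R := R.invertibleOfIsUnitDet hR
  haveI : Invertible Rᵀ := Rᵀ.invertibleOfIsUnitDet (by simpa using hR)
  set D : Matrix (Fin n) (Fin n) ℝ := Matrix.diagonal d with hD
  set M : Matrix (Fin n) (Fin n) ℝ := R⁻¹ * H * R⁻¹ᵀ with hM
  have hHsym : Hᵀ = H := by
    simpa [conjTranspose_eq_transpose_of_trivial] using hH.isHermitian.eq
  have hDsym : Dᵀ = D := Matrix.diagonal_transpose d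
  have hMps : M.PosSemidef := by
    have := hH.posSemidef.mul_mul_conjTranspose_same R⁻¹
    simpa [hM, conjTranspose_eq_transpose_of_trivial, Matrix.mul_assoc] using this
  -- commutation D * M = M * D
  have hAHs : R * D * R⁻¹ * H = H * R⁻¹ᵀ * D * Rᵀ := by
    have h1 : (R * D * R⁻¹ * H)ᵀ = R * D * R⁻¹ * H := by rw [← hdiag]; exact hAH
    conv_lhs => rw [← h1]
    simp [Matrix.transpose_mul, hHsym, hDsym, Matrix.mul_assoc]
  have hcomm : D * M = M * D := by
    have h2 := congrArg (fun X => R⁻¹ * X * R⁻¹ᵀ) hAHs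
    simp only [hM, Matrix.mul_assoc, transpose_nonsing_inv] at h2 ⊢
    rw [Matrix.inv_mul_cancel_left_of_invertible] at h2
    simpa [Matrix.mul_assoc, Matrix.mul_inv_cancel_left_of_invertible] using h2
  -- square root
  set S : Matrix (Fin n) (Fin n) ℝ := CFC.sqrt M with hS
  have hSps : S.PosSemidef := (CFC.sqrt_nonneg M).posSemidef
  have hSsym : Sᵀ = S := by
    simpa [conjTranspose_eq_transpose_of_trivial] using hSps.isHermitian.eq
  have hSS : S * S = M := CFC.sqrt_mul_sqrt_self M hMps.nonneg
  have hdetS : IsUnit S.det := by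
    have hdetM : IsUnit M.det := by
      rw [hM]
      simp only [Matrix.det_mul, Matrix.det_transpose]
      exact ((R.isUnit_nonsing_inv_det hR).mul hH.det_pos.ne'.isUnit).mul
        (R.isUnit_nonsing_inv_det hR)
    have hsq : S.det * S.det = M.det := by rw [← Matrix.det_mul, hSS]
    rw [isUnit_iff_ne_zero] at hdetM ⊢
    intro h0
    rw [← hsq, h0, mul_zero] at hdetM
    exact hdetM rfl
  haveI : Invertible S := S.invertibleOfIsUnitDet hdetS
  -- the commutator X = DS - SD vanishes
  set X : Matrix (Fin n) (Fin n) ℝ := D * S - S * D with hX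
  have hXanti : Xᵀ = -X := by
    simp [hX, Matrix.transpose_sub, Matrix.transpose_mul, hSsym, hDsym]
  have hanti : S * X + X * S = 0 := by
    have key : S * X + X * S = D * (S * S) - (S * S) * D := by rw [hX]; noncomm_ring
    rw [key, hSS, hcomm, sub_self]
  have hXS : X * S = -(S * X) := by
    have := eq_neg_of_add_eq_zero_right hanti
    exact this
  set N : Matrix (Fin n) (Fin n) ℝ := Xᵀ * S * X with hN
  have hNps : N.PosSemidef := by
    have := hSps.conjTranspose_mul_mul_same X
    simpa [hN, conjTranspose_eq_transpose_of_trivial] using this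
  have hNe : N = S * (X * X) := by
    calc N = -(X * S) * X := by rw [hN, hXanti]; noncomm_ring
      _ = (S * X) * X := by rw [hXS]; noncomm_ring
      _ = S * (X * X) := by noncomm_ring
  have htr : N.trace = 0 := by
    have h1 : N.trace = -(((X * X) * S).trace) := by
      rw [hN, Matrix.mul_assoc, Matrix.trace_mul_comm, hXanti,
        show S * X * -X = -(S * (X * X)) by noncomm_ring, Matrix.trace_neg,
        Matrix.trace_mul_comm]
    have h2 : N.trace = ((X * X) * S).trace := by rw [hNe, Matrix.trace_mul_comm]
    linarith
  have hN0 : N = 0 := psd_trace_zero hNps htr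
  have hXX : X * X = 0 := by
    have hz : S * (X * X) = 0 := by rw [← hNe, hN0]
    calc X * X = S⁻¹ * (S * (X * X)) := (Matrix.inv_mul_cancel_left_of_invertible _ _).symm
      _ = 0 := by rw [hz, Matrix.mul_zero]
  have hX0 : X = 0 := by
    have hc : Xᴴ * X = 0 := by
      rw [conjTranspose_eq_transpose_of_trivial, hXanti, Matrix.neg_mul, hXX, neg_zero]
    exact Matrix.conjTranspose_mul_self_eq_zero.mp hc
  have hDS : D * S = S * D := by
    have := hX ▸ hX0
    exact sub_eq_zero.mp this
  refine ⟨R * S, ?_, ?_, ?_⟩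
  · rw [Matrix.det_mul]; exact hR.mul hdetS
  · rw [hdiag, Matrix.mul_inv_rev]
    have key : R * S * D * (S⁻¹ * R⁻¹) = R * D * R⁻¹ := by
      rw [Matrix.mul_assoc R S D, ← hDS]
      simp [Matrix.mul_assoc, Matrix.mul_inv_cancel_left_of_invertible]
    rw [key]
  · rw [Matrix.transpose_mul, hSsym]
    have key : R * S * (S * Rᵀ) = H := by
      calc R * S * (S * Rᵀ) = R * (S * S) * Rᵀ := by noncomm_ring
        _ = R * (R⁻¹ * H * R⁻¹ᵀ) * Rᵀ := by rw [hSS, hM]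
        _ = H := by
            rw [transpose_nonsing_inv]
            simp [Matrix.mul_assoc, Matrix.mul_inv_cancel_left_of_invertible,
              Matrix.inv_mul_of_invertible]
    rw [key]
end

section
/- Let B be a real n×n diagonalizable matrix with real nonzero eigenvalues and let S be symmetric positive definite such that BS is symmetric. Then |B| S is symmetric positive definite, where |B| = R|Λ|R⁻¹ for any diagonalization B = RΛR⁻¹. -/
open Matrix

lemma posDef_conj_real {m : ℕ} {M : Matrix (Fin m) (Fin m) ℝ} (hM : M.PosDef)
    (C : Matrix (Fin m) (Fin m) ℝ) (hC : IsUnit C.det) : (C * M * Cᵀ).PosDef := by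
  have hCT : Cᵀ = Cᴴ := (conjTranspose_eq_transpose_of_trivial C).symm
  rw [posDef_iff_dotProduct_mulVec]
  constructor
  · rw [hCT]
    exact (hM.posSemidef.mul_mul_conjTranspose_same C).isHermitian
  · intro x hx
    have hker : Cᵀ *ᵥ x ≠ 0 := by
      have hu : IsUnit Cᵀ := (Matrix.isUnit_iff_isUnit_det _).2 (by rwa [det_transpose])
      exact (Matrix.mulVec_injective_iff_isUnit.mpr hu |>.ne_iff' (by simp)).2 hx
    have key : star x ⬝ᵥ (C * M * Cᵀ) *ᵥ x
        = star (Cᵀ *ᵥ x) ⬝ᵥ M *ᵥ (Cᵀ *ᵥ x) := by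
      simp only [star_trivial, ← mulVec_mulVec, Matrix.dotProduct_mulVec x C]
      congr 1
      ext i
      simp [vecMul, mulVec, dotProduct, transpose_apply, mul_comm]
    rw [key]
    exact hM.dotProduct_mulVec_pos hker

/-- If `B = R * diagonal d * R⁻¹` is diagonalizable with real nonzero
eigenvalues, `S` is symmetric positive definite and `B * S` is symmetric, then
`|B| * S` is symmetric positive definite, where `|B| = R * diagonal |d| * R⁻¹`. -/
theorem stmt_4 (n : ℕ) (B S R : Matrix (Fin n) (Fin n) ℝ) (d : Fin n → ℝ)
    (hR : IsUnit R.det) (hB : B = R * Matrix.diagonal d * R⁻¹)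
    (hd : ∀ i, d i ≠ 0) (hS : S.PosDef) (hBS : (B * S).IsSymm) :
    ((R * Matrix.diagonal (fun i => |d i|) * R⁻¹) * S).PosDef := by
  have hRne : R.det ≠ 0 := isUnit_iff_ne_zero.mp hR
  have hRinv : IsUnit R⁻¹.det := by
    rw [det_nonsing_inv, Ring.inverse_eq_inv']
    exact isUnit_iff_ne_zero.mpr (inv_ne_zero hRne)
  have hRT : IsUnit Rᵀ.det := by rwa [det_transpose]
  set M : Matrix (Fin n) (Fin n) ℝ := R⁻¹ * S * R⁻¹ᵀ with hMdef
  have hM : M.PosDef := posDef_conj_real hS R⁻¹ hRinv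
  have hMsym : Mᵀ = M := by
    have := hM.isHermitian
    rwa [IsHermitian, conjTranspose_eq_transpose_of_trivial] at this
  have h1 : R⁻¹ᵀ * Rᵀ = 1 := by
    rw [← transpose_mul, Matrix.mul_nonsing_inv R hR, transpose_one]
  have h4 : Rᵀ * Rᵀ⁻¹ = 1 := Matrix.mul_nonsing_inv _ hRT
  have hSM : R * M * Rᵀ = S := by
    have e : R * M * Rᵀ = (R * R⁻¹) * S * (R⁻¹ᵀ * Rᵀ) := by rw [hMdef]; noncomm_ring
    rw [e, Matrix.mul_nonsing_inv R hR, h1, Matrix.one_mul, Matrix.mul_one]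
  have hRS : R⁻¹ * S = M * Rᵀ := by
    rw [← hSM, ← Matrix.mul_assoc, Matrix.nonsing_inv_mul_cancel_left R M hR]
  have hBS2 : R * (Matrix.diagonal d * M) * Rᵀ = R * (M * Matrix.diagonal d) * Rᵀ := by
    have e1 : B * S = R * (Matrix.diagonal d * M) * Rᵀ := by
      rw [hB, Matrix.mul_assoc (R * Matrix.diagonal d), hRS]
      noncomm_ring
    have e2 := hBS.eq
    rw [e1] at e2
    calc R * (Matrix.diagonal d * M) * Rᵀ = (R * (Matrix.diagonal d * M) * Rᵀ)ᵀ := e2.symm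
      _ = R * (Mᵀ * (Matrix.diagonal d)ᵀ) * Rᵀ := by
          simp [transpose_mul, Matrix.mul_assoc]
      _ = R * (M * Matrix.diagonal d) * Rᵀ := by rw [hMsym, diagonal_transpose]
  have hcomm : Matrix.diagonal d * M = M * Matrix.diagonal d := by
    have h3 := congrArg (fun Z => R⁻¹ * Z * Rᵀ⁻¹) hBS2
    simp only [Matrix.mul_assoc, h4, Matrix.mul_one] at h3
    rwa [Matrix.nonsing_inv_mul_cancel_left R _ hR,
      Matrix.nonsing_inv_mul_cancel_left R _ hR] at h3
  have keyentry : ∀ i j, d i * M i j = d j * M i j := by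
    intro i j
    have h5 := congrFun (congrFun hcomm i) j
    rw [Matrix.diagonal_mul, Matrix.mul_diagonal] at h5
    exact h5.trans (mul_comm _ _)
  set Dh : Matrix (Fin n) (Fin n) ℝ := Matrix.diagonal (fun i => Real.sqrt |d i|) with hDh
  have habs : Dh * M * Dh = Matrix.diagonal (fun i => |d i|) * M := by
    ext i j
    simp only [hDh, Matrix.mul_diagonal, Matrix.diagonal_mul]
    rcases eq_or_ne (M i j) 0 with h | h
    · simp [h]
    · have hdij : d i = d j := mul_right_cancel₀ h (keyentry i j)
      rw [hdij, mul_right_comm, Real.mul_self_sqrt (abs_nonneg _)]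
  have hdet : IsUnit (R * Dh).det := by
    rw [det_mul, hDh, det_diagonal]
    refine isUnit_iff_ne_zero.mpr (mul_ne_zero hRne ?_)
    rw [Finset.prod_ne_zero_iff]
    exact fun i _ => Real.sqrt_ne_zero'.mpr (abs_pos.mpr (hd i))
  have hfin : (R * Matrix.diagonal (fun i => |d i|) * R⁻¹) * S
      = (R * Dh) * M * (R * Dh)ᵀ := by
    rw [Matrix.mul_assoc (R * Matrix.diagonal _), hRS]
    have e : (R * Matrix.diagonal (fun i => |d i|)) * (M * Rᵀ)
        = R * ((Matrix.diagonal fun i => |d i|) * M) * Rᵀ := by noncomm_ring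
    rw [e, ← habs, transpose_mul, hDh, diagonal_transpose]
    noncomm_ring
  rw [hfin]
  exact posDef_conj_real hM (R * Dh) hdet
end

section
/- Let A_z = [[u, a/M], [a/M, u]] with 0 < Mu < a, and let P_z = [[1, p], [−p, 1]] for any real p. Then P_z is invertible, its symmetric part is the identity (hence P_z is positive definite as a quadratic form), and the eigenvalues of P_z A_z are u + a_p and u − a_p where a_p = sqrt(u² + (1 + p²)(a²/M² − u²)). -/
/-!
`P = 1 + p • J` with `J = !![0, 1; -1, 0]` skew-symmetric, so `P` has symmetric part `1` and
`x ⬝ᵥ P *ᵥ x = x ⬝ᵥ x`. Expanding the 2×2 determinant, the characteristic polynomial of `P A` is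
`(u - x)² - (u² + (1 + p²)((a/M)² - u²))`; the subtracted term is nonnegative because `|M u| < a`,
so it factors over `ℝ` with the square root `a_p`.
-/

open Matrix

namespace Matrix

variable {R n : Type*} [Fintype n]

theorem dotProduct_self_pos [Field R] [LinearOrder R] [IsStrictOrderedRing R] {x : n → R}
    (hx : x ≠ 0) : 0 < x ⬝ᵥ x :=
  lt_of_le_of_ne (Finset.sum_nonneg fun i _ => mul_self_nonneg (x i))
    (Ne.symm (dotProduct_self_eq_zero.not.mpr hx))

theorem dotProduct_mulVec_self_of_symmPart_eq_one [Field R] [NeZero (2 : R)] [DecidableEq n]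
    {A : Matrix n n R} (hA : (1 / 2 : R) • (A + Aᵀ) = 1) (x : n → R) :
    x ⬝ᵥ A *ᵥ x = x ⬝ᵥ x := by
  have htranspose : x ⬝ᵥ Aᵀ *ᵥ x = x ⬝ᵥ A *ᵥ x := by
    rw [dotProduct_mulVec, vecMul_transpose, dotProduct_comm]
  calc x ⬝ᵥ A *ᵥ x = (1 / 2 : R) * (x ⬝ᵥ A *ᵥ x + x ⬝ᵥ Aᵀ *ᵥ x) := by
        rw [htranspose, ← two_mul, ← mul_assoc, one_div_mul_cancel two_ne_zero, one_mul]
    _ = x ⬝ᵥ ((1 / 2 : R) • (A + Aᵀ)) *ᵥ x := by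
        rw [smul_mulVec, add_mulVec, dotProduct_smul, dotProduct_add, smul_eq_mul]
    _ = x ⬝ᵥ x := by rw [hA, one_mulVec]

theorem dotProduct_mulVec_self_pos_of_symmPart_eq_one [Field R] [LinearOrder R]
    [IsStrictOrderedRing R] [DecidableEq n] {A : Matrix n n R}
    (hA : (1 / 2 : R) • (A + Aᵀ) = 1) {x : n → R} (hx : x ≠ 0) : 0 < x ⬝ᵥ A *ᵥ x := by
  rw [dotProduct_mulVec_self_of_symmPart_eq_one hA]
  exact dotProduct_self_pos hx

theorem det_one_skew [CommRing R] (p : R) : !![1, p; -p, 1].det = 1 + p ^ 2 := by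
  rw [det_fin_two_of]
  ring

theorem symmPart_one_skew [Field R] [NeZero (2 : R)] (p : R) :
    (1 / 2 : R) • (!![1, p; -p, 1] + !![1, p; -p, 1]ᵀ) = 1 := by
  ext i j
  fin_cases i <;> fin_cases j <;> simp <;> field_simp <;> ring

theorem det_one_skew_mul_sub_smul_one [CommRing R] (p u b x : R) :
    (!![1, p; -p, 1] * !![u, b; b, u] - x • 1).det =
      (u - x) ^ 2 - (u ^ 2 + (1 + p ^ 2) * (b ^ 2 - u ^ 2)) := by
  simp only [mul_fin_two, one_fin_two, smul_of, smul_cons, smul_empty, smul_eq_mul, mul_one,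
    mul_zero, of_sub_of, cons_sub_cons, empty_sub_empty, det_fin_two_of]
  ring

end Matrix

theorem sub_sq_sub_eq_mul_sqrt (c d x : ℝ) (hd : 0 ≤ d) :
    (c - x) ^ 2 - d = (c + √d - x) * (c - √d - x) := by
  linear_combination Real.sq_sqrt hd

theorem sq_le_div_sq_of_sq_mul_le {M u a : ℝ} (hM : M ≠ 0) (h : (M * u) ^ 2 ≤ a ^ 2) :
    u ^ 2 ≤ a ^ 2 / M ^ 2 := by
  rw [le_div_iff₀ (by positivity), mul_comm, ← mul_pow]
  exact h

theorem stmt_9_general (u a M p : ℝ)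
    (hu : 0 < M * u) (hsub : M * u < a) :
    IsUnit (!![(1 : ℝ), p; -p, 1]).det ∧
    ((1 / 2 : ℝ) • (!![(1 : ℝ), p; -p, 1] + (!![(1 : ℝ), p; -p, 1]).transpose) = 1) ∧
    (∀ x : Fin 2 → ℝ, x ≠ 0 → 0 < x ⬝ᵥ (!![(1 : ℝ), p; -p, 1] *ᵥ x)) ∧
    (∀ x : ℝ,
      (!![(1 : ℝ), p; -p, 1] * !![u, a / M; a / M, u] - x • 1).det =
        (u + Real.sqrt (u ^ 2 + (1 + p ^ 2) * (a ^ 2 / M ^ 2 - u ^ 2)) - x) *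
        (u - Real.sqrt (u ^ 2 + (1 + p ^ 2) * (a ^ 2 / M ^ 2 - u ^ 2)) - x)) := by
  have hsymm := symmPart_one_skew p
  refine ⟨?_, hsymm, fun x hx => dotProduct_mulVec_self_pos_of_symmPart_eq_one hsymm hx, ?_⟩
  · rw [det_one_skew, isUnit_iff_ne_zero]
    positivity
  · intro x
    have hu_sq : u ^ 2 ≤ a ^ 2 / M ^ 2 :=
      sq_le_div_sq_of_sq_mul_le (left_ne_zero_of_mul hu.ne') (by nlinarith)
    have hdisc : 0 ≤ u ^ 2 + (1 + p ^ 2) * (a ^ 2 / M ^ 2 - u ^ 2) :=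
      add_nonneg (sq_nonneg u) (mul_nonneg (by positivity) (sub_nonneg.mpr hu_sq))
    rw [det_one_skew_mul_sub_smul_one, div_pow, sub_sq_sub_eq_mul_sqrt _ _ _ hdisc]

/-- Miczek's 2×2 preconditioner: for `A_z = [[u, a/M],[a/M, u]]` with
`0 < M u < a` and `P_z = [[1, p],[-p, 1]]`, the matrix `P_z` is invertible, its
symmetric part is the identity (so it is positive definite as a quadratic form),
and the eigenvalues of `P_z A_z` are `u + a_p` and `u - a_p` with
`a_p = sqrt (u² + (1 + p²)(a²/M² - u²))`. -/
theorem stmt_9 (u a M p : ℝ) (ha : 0 < a) (hM : 0 < M)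
    (hu : 0 < M * u) (hsub : M * u < a) :
    IsUnit (!![(1 : ℝ), p; -p, 1]).det ∧
    ((1 / 2 : ℝ) • (!![(1 : ℝ), p; -p, 1] + (!![(1 : ℝ), p; -p, 1]).transpose) = 1) ∧
    (∀ x : Fin 2 → ℝ, x ≠ 0 → 0 < x ⬝ᵥ (!![(1 : ℝ), p; -p, 1] *ᵥ x)) ∧
    (∀ x : ℝ,
      (!![(1 : ℝ), p; -p, 1] * !![u, a / M; a / M, u] - x • 1).det =
        (u + Real.sqrt (u ^ 2 + (1 + p ^ 2) * (a ^ 2 / M ^ 2 - u ^ 2)) - x) *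
        (u - Real.sqrt (u ^ 2 + (1 + p ^ 2) * (a ^ 2 / M ^ 2 - u ^ 2)) - x)) :=
  stmt_9_general u a M p hu hsub
end
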